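/- arXiv:2209.10339 — 2 statements merged into one kernel-verified Lean document; each statement's English description precedes it below -/
import Mathlib

section
/- (Double robustness of Λ₂^⊥ elements.) Let ε(m) = Y₁e^{−β(X)D₁} − Y₀e^{−β(X)D₀+m(X)}, λ(X,Z) = E(Y₀e^{−β(X)D₀} | Z, X)/E(Y₀e^{−β(X)D₀} | X), and σ²(X,Z) = E(ε² | X, Z). Suppose the true m₀ satisfies E{ε(m₀) | X, Z} = 0. Define d*(X,Z) = [λ(X,Z)σ^{−2}(X,Z) / E{λ²(X,Z)σ^{−2}(X,Z) | X}]·E{d(X,Z)λ(X,Z) | X}. Then for any function m (possibly ≠ m₀) and any vector function d(X,Z), E{[d(X,Z) − d*(X,Z)]·ε(m)} = 0. -/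
open MeasureTheory Real

/-!
Under the true model, `E[ε(m) | X, Z] = λ φ` with `φ = E[W | X] (e^{m₀} - e^{m})` a function
of `X`. Hence `E[(d - d*) ε(m)] = E[φ dλ - ψ λ²σ⁻²]` with `ψ = φ E[dλ | X] / E[λ²σ⁻² | X]`,
and conditioning on `X` both terms have conditional mean `φ E[dλ | X]`. As `φ` and `ψ` need not be
bounded, the conditioning is carried out on the `X`-measurable sets where both are bounded, which
exhaust `Ω`.
-/

namespace MeasureTheory

variable {Ω : Type*} {mΩ : MeasurableSpace Ω} {μ : Measure Ω} {m : MeasurableSpace Ω}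

lemma integrable_of_not_condExp_ae_eq_zero {f : Ω → ℝ} (h : ¬ μ[f|m] =ᵐ[μ] 0) :
    Integrable f μ := by
  by_contra hf
  exact h (by rw [condExp_of_not_integrable hf])

lemma not_condExp_ae_eq_zero_of_le [IsFiniteMeasure μ] {m' : MeasurableSpace Ω} (hmm' : m ≤ m')
    (hm' : m' ≤ mΩ) {f : Ω → ℝ} (h : ¬ μ[f|m] =ᵐ[μ] 0) : ¬ μ[f|m'] =ᵐ[μ] 0 := by
  intro h0
  apply h
  calc μ[f|m] =ᵐ[μ] μ[μ[f|m']|m] := (condExp_condExp_of_le hmm' hm').symm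
    _ =ᵐ[μ] μ[0|m] := condExp_congr_ae h0
    _ = 0 := condExp_zero

lemma condExp_sub_mul_eq_of_condExp_eq_mul {A W k₀ k : Ω → ℝ} (hW : Integrable W μ)
    (hk : StronglyMeasurable[m] k) (hA : μ[A|m] =ᵐ[μ] μ[W|m] * k₀)
    (hk₀ : ∀ᵐ ω ∂μ, k₀ ω ≠ 0)
    (hW0 : ¬ μ[W|m] =ᵐ[μ] 0) (hAWk : Integrable (A - W * k) μ) :
    μ[A - W * k|m] =ᵐ[μ] μ[W|m] * (k₀ - k) := by
  have hAint : Integrable A μ := by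
    refine integrable_of_not_condExp_ae_eq_zero (m := m) fun h0 => hW0 ?_
    filter_upwards [hA, h0, hk₀] with ω hA h0 hk₀
    simpa [hk₀] using hA.symm.trans h0
  have hWk : Integrable (W * k) μ := by simpa using hAint.sub hAWk
  filter_upwards [condExp_sub hAint hWk m, hA, condExp_mul_of_stronglyMeasurable_right hk hWk hW]
    with ω h₁ h₂ h₃
  simp only [h₁, Pi.sub_apply, h₂, h₃, Pi.mul_apply]
  ring

lemma condExp_sub_mul_eq_ratio_mul_of_le [IsFiniteMeasure μ] [NeZero μ]
    {m' : MeasurableSpace Ω} (hmm' : m ≤ m') (hm' : m' ≤ mΩ) {A W k₀ k lam : Ω → ℝ}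
    (hW : Integrable W μ) (hk : StronglyMeasurable[m'] k) (hA : μ[A|m'] =ᵐ[μ] μ[W|m'] * k₀)
    (hk₀ : ∀ᵐ ω ∂μ, k₀ ω ≠ 0) (hWpos : ∀ᵐ ω ∂μ, 0 < μ[W|m] ω)
    (hlam : lam =ᵐ[μ] μ[W|m'] / μ[W|m]) (hAWk : Integrable (A - W * k) μ) :
    μ[A - W * k|m'] =ᵐ[μ] lam * (μ[W|m] * (k₀ - k)) := by
  have hW0 : ¬ μ[W|m'] =ᵐ[μ] 0 := not_condExp_ae_eq_zero_of_le hmm' hm' fun h0 => by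
    obtain ⟨ω, hpos, hzero⟩ := (hWpos.and h0).exists
    exact hpos.ne' hzero
  filter_upwards [condExp_sub_mul_eq_of_condExp_eq_mul hW hk hA hk₀ hW0 hAWk, hlam, hWpos]
    with ω h₁ h₂ h₃
  simp only [h₁, h₂, Pi.mul_apply, Pi.div_apply]
  field_simp

lemma integral_mul_sub_mul_eq_zero_of_bounded [IsFiniteMeasure μ] (hm : m ≤ mΩ)
    {a b f g : Ω → ℝ} {C : ℝ} (ha : StronglyMeasurable[m] a) (hb : StronglyMeasurable[m] b)
    (haC : ∀ ω, |a ω| ≤ C) (hbC : ∀ ω, |b ω| ≤ C) (hf : Integrable f μ)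
    (hg : Integrable g μ)
    (hcond : a * μ[f|m] =ᵐ[μ] b * μ[g|m]) :
    ∫ ω, (a * f - b * g) ω ∂μ = 0 := by
  have haf : Integrable (a * f) μ :=
    hf.bdd_mul (ha.mono hm).aestronglyMeasurable (ae_of_all _ haC)
  have hbg : Integrable (b * g) μ :=
    hg.bdd_mul (hb.mono hm).aestronglyMeasurable (ae_of_all _ hbC)
  calc ∫ ω, (a * f - b * g) ω ∂μ = ∫ ω, μ[a * f - b * g|m] ω ∂μ :=
        (integral_condExp hm).symm
    _ = ∫ _, (0 : ℝ) ∂μ := by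
      refine integral_congr_ae ?_
      filter_upwards [condExp_sub haf hbg m, condExp_mul_of_stronglyMeasurable_left ha haf hf,
        condExp_mul_of_stronglyMeasurable_left hb hbg hg, hcond] with ω h₁ h₂ h₃ h₄
      simp only [h₁, Pi.sub_apply, h₂, h₃]
      exact sub_eq_zero.2 h₄
    _ = 0 := integral_zero _ _

lemma integral_mul_sub_mul_eq_zero_of_condExp [IsFiniteMeasure μ] (hm : m ≤ mΩ)
    {a b f g : Ω → ℝ} (ha : StronglyMeasurable[m] a) (hb : StronglyMeasurable[m] b)
    (hf : Integrable f μ) (hg : Integrable g μ) (hint : Integrable (a * f - b * g) μ)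
    (hcond : a * μ[f|m] =ᵐ[μ] b * μ[g|m]) :
    ∫ ω, (a * f - b * g) ω ∂μ = 0 := by
  set s : ℕ → Set Ω := fun n => {ω | |a ω| ≤ n ∧ |b ω| ≤ n}
  have hs (n : ℕ) : MeasurableSet[m] (s n) :=
    (measurableSet_le ha.measurable.abs measurable_const).inter
      (measurableSet_le hb.measurable.abs measurable_const)
  have hmono : Monotone s := fun n n' hnn' ω hω =>
    ⟨hω.1.trans (by gcongr), hω.2.trans (by gcongr)⟩
  have hcover : ⋃ n, s n = Set.univ := Set.eq_univ_of_forall fun ω => by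
    obtain ⟨n, hn⟩ := exists_nat_ge (max |a ω| |b ω|)
    exact Set.mem_iUnion.2 ⟨n, le_of_max_le_left hn, le_of_max_le_right hn⟩
  have hzero (n : ℕ) : ∫ ω in s n, (a * f - b * g) ω ∂μ = 0 := by
    have hbound {c : Ω → ℝ} (hc : ∀ ω ∈ s n, |c ω| ≤ n) (ω : Ω) :
        |(s n).indicator c ω| ≤ n := by
      by_cases hω : ω ∈ s n <;> simp [hω, hc]
    have hind : (s n).indicator (a * f - b * g)
        = (s n).indicator a * f - (s n).indicator b * g := by
      ext ω
      by_cases hω : ω ∈ s n <;> simp [hω]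
    rw [← integral_indicator (hm _ (hs n)), hind]
    refine integral_mul_sub_mul_eq_zero_of_bounded hm (ha.indicator (hs n)) (hb.indicator (hs n))
      (hbound fun ω hω => hω.1) (hbound fun ω hω => hω.2) hf hg ?_
    filter_upwards [hcond] with ω hω'
    by_cases hω : ω ∈ s n
    · simpa [hω] using hω'
    · simp [hω]
  have hlim := tendsto_setIntegral_of_monotone (fun n => hm _ (hs n)) hmono
    (by rw [hcover]; exact hint.integrableOn)
  rw [hcover, setIntegral_univ] at hlim
  exact tendsto_nhds_unique hlim (by simp only [hzero, tendsto_const_nhds])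

lemma integral_mul_eq_zero_of_condExp_eq_mul [IsFiniteMeasure μ] {m' : MeasurableSpace Ω}
    (hmm' : m ≤ m') (hm' : m' ≤ mΩ) {u ε lam φ c f g : Ω → ℝ}
    (hu : AEStronglyMeasurable[m'] u μ)
    (hε : Integrable ε μ) (huε : Integrable (u * ε) μ) (hφ : StronglyMeasurable[m] φ)
    (hc : StronglyMeasurable[m] c) (hf : Integrable f μ) (hg : Integrable g μ)
    (hcondε : μ[ε|m'] =ᵐ[μ] lam * φ) (hulam : u * lam =ᵐ[μ] f - c * g)
    (hcond : μ[f|m] =ᵐ[μ] c * μ[g|m]) :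
    ∫ ω, (u * ε) ω ∂μ = 0 := by
  have hH : μ[u * ε|m'] =ᵐ[μ] φ * f - (c * φ) * g := by
    filter_upwards [condExp_mul_of_aestronglyMeasurable_left hu huε hε, hcondε, hulam]
      with ω h₁ h₂ h₃
    simp only [Pi.mul_apply, Pi.sub_apply] at h₁ h₂ h₃ ⊢
    rw [h₁, h₂, ← mul_assoc, h₃]
    ring
  calc ∫ ω, (u * ε) ω ∂μ = ∫ ω, μ[u * ε|m'] ω ∂μ := (integral_condExp hm').symm
    _ = ∫ ω, (φ * f - (c * φ) * g) ω ∂μ := integral_congr_ae hH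
    _ = 0 := by
      refine integral_mul_sub_mul_eq_zero_of_condExp (hmm'.trans hm') hφ (hc.mul hφ) hf hg
        (integrable_condExp.congr hH) ?_
      filter_upwards [hcond] with ω hω
      simp only [Pi.mul_apply] at hω ⊢
      rw [hω]
      ring

end MeasureTheory

theorem double_robustness_Lambda2_perp_general
    {Ω : Type*} {mΩ : MeasurableSpace Ω}
    (μ : Measure Ω) [IsProbabilityMeasure μ]
    (mX mXZ : MeasurableSpace Ω) (hle : mX ≤ mXZ) (hXZ : mXZ ≤ mΩ)
    (D₀ D₁ Y₀ Y₁ βX m₀X mXfun : Ω → ℝ)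
    (hm₀X : StronglyMeasurable[mX] m₀X) (hmXfun : StronglyMeasurable[mX] mXfun)
    (W : Ω → ℝ) (hW : W = fun ω => Y₀ ω * Real.exp (-(βX ω) * D₀ ω))
    (hWint : Integrable W μ)
    (hWpos : ∀ᵐ ω ∂μ, 0 < (μ[W | mX]) ω)
    -- true model: E{ε(m₀) | X, Z} = 0
    (htrue : μ[fun ω => Y₁ ω * Real.exp (-(βX ω) * D₁ ω) | mXZ]
      =ᵐ[μ] fun ω => (μ[W | mXZ]) ω * Real.exp (m₀X ω))
    -- λ(X,Z)
    (lam : Ω → ℝ) (hlamMeas : StronglyMeasurable[mXZ] lam)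
    (hlam : lam =ᵐ[μ] fun ω => (μ[W | mXZ]) ω / (μ[W | mX]) ω)
    (σsq : Ω → ℝ) (hσMeas : StronglyMeasurable[mXZ] σsq)
    -- the given index function d(X,Z)
    (d : Ω → ℝ) (hdMeas : StronglyMeasurable[mXZ] d)
    (hdenpos : ∀ᵐ ω ∂μ, 0 < (μ[fun ω' => lam ω' ^ 2 * (σsq ω')⁻¹ | mX]) ω)
    -- d*(X,Z)
    (dstar : Ω → ℝ)
    (hdstar : dstar =ᵐ[μ] fun ω =>
      lam ω * (σsq ω)⁻¹ / (μ[fun ω' => lam ω' ^ 2 * (σsq ω')⁻¹ | mX]) ω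
        * (μ[fun ω' => d ω' * lam ω' | mX]) ω)
    -- possibly misspecified residual ε(m)
    (ε : Ω → ℝ)
    (hε : ε = fun ω => Y₁ ω * Real.exp (-(βX ω) * D₁ ω)
                - Y₀ ω * Real.exp (-(βX ω) * D₀ ω + mXfun ω))
    -- integrability of everything appearing
    (hεint : Integrable ε μ)
    (hint : Integrable (fun ω => (d ω - dstar ω) * ε ω) μ)
    (hint2 : Integrable (fun ω => d ω * lam ω) μ)
    (hint3 : Integrable (fun ω => lam ω ^ 2 * (σsq ω)⁻¹) μ) :
    ∫ ω, (d ω - dstar ω) * ε ω ∂μ = 0 := by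
  set N := μ[fun ω => d ω * lam ω|mX]
  set Dn := μ[fun ω => lam ω ^ 2 * (σsq ω)⁻¹|mX]
  set φ : Ω → ℝ := μ[W|mX] * fun ω => exp (m₀X ω) - exp (mXfun ω)
  have hN : StronglyMeasurable[mX] N := stronglyMeasurable_condExp
  have hDn : StronglyMeasurable[mX] Dn := stronglyMeasurable_condExp
  have hcondε : μ[ε|mXZ] =ᵐ[μ] lam * φ := by
    have hεW : ε = (fun ω => Y₁ ω * exp (-(βX ω) * D₁ ω))
        - W * fun ω => exp (mXfun ω) := by
      subst hε hW
      funext ω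
      simp only [Pi.sub_apply, Pi.mul_apply, exp_add]
      ring
    rw [hεW] at hεint ⊢
    exact condExp_sub_mul_eq_ratio_mul_of_le hle hXZ hWint
      (continuous_exp.comp_stronglyMeasurable (hmXfun.mono hle)) htrue
      (ae_of_all _ fun ω => exp_ne_zero _) hWpos hlam hεint
  have hdiff : AEStronglyMeasurable[mXZ] (fun ω => d ω - dstar ω) μ := by
    have := hN.mono hle
    have := hDn.mono hle
    refine ⟨d - lam * σsq⁻¹ / Dn * N, by fun_prop, ?_⟩
    filter_upwards [hdstar] with ω hω
    simp [hω]
  have hulam : (fun ω => d ω - dstar ω) * lam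
      =ᵐ[μ] (fun ω => d ω * lam ω) - N / Dn * fun ω => lam ω ^ 2 * (σsq ω)⁻¹ := by
    filter_upwards [hdstar] with ω hω
    simp only [hω, Pi.mul_apply, Pi.sub_apply, Pi.div_apply]
    ring
  have hcond : N =ᵐ[μ] N / Dn * Dn := by
    filter_upwards [hdenpos] with ω hω
    simp only [Pi.mul_apply, Pi.div_apply]
    field_simp
  exact integral_mul_eq_zero_of_condExp_eq_mul hle hXZ hdiff hεint hint
    (stronglyMeasurable_condExp.mul (by fun_prop)) (by fun_prop) hint2 hint3 hcondε hulam hcond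

/-- Double robustness of the elements of Λ₂^⊥: for any (possibly
misspecified) m and any function d(X,Z), E{[d(X,Z) − d*(X,Z)]·ε(m)} = 0. -/
theorem double_robustness_Lambda2_perp
    {Ω : Type*} {mΩ : MeasurableSpace Ω}
    (μ : Measure Ω) [IsProbabilityMeasure μ]
    (mX mXZ : MeasurableSpace Ω) (hle : mX ≤ mXZ) (hXZ : mXZ ≤ mΩ)
    (D₀ D₁ Y₀ Y₁ βX m₀X mXfun : Ω → ℝ)
    (hβX : StronglyMeasurable[mX] βX)
    (hm₀X : StronglyMeasurable[mX] m₀X) (hmXfun : StronglyMeasurable[mX] mXfun)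
    (W : Ω → ℝ) (hW : W = fun ω => Y₀ ω * Real.exp (-(βX ω) * D₀ ω))
    (hWint : Integrable W μ)
    (hWpos : ∀ᵐ ω ∂μ, 0 < (μ[W | mX]) ω)
    -- true model: E{ε(m₀) | X, Z} = 0
    (htrue : μ[fun ω => Y₁ ω * Real.exp (-(βX ω) * D₁ ω) | mXZ]
      =ᵐ[μ] fun ω => (μ[W | mXZ]) ω * Real.exp (m₀X ω))
    -- λ(X,Z)
    (lam : Ω → ℝ) (hlamMeas : StronglyMeasurable[mXZ] lam)
    (hlam : lam =ᵐ[μ] fun ω => (μ[W | mXZ]) ω / (μ[W | mX]) ω)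
    -- σ²(X,Z) = E(ε² | X, Z) at the true model
    (εtrue : Ω → ℝ)
    (hεtrue : εtrue = fun ω => Y₁ ω * Real.exp (-(βX ω) * D₁ ω)
                - Y₀ ω * Real.exp (-(βX ω) * D₀ ω + m₀X ω))
    (σsq : Ω → ℝ) (hσMeas : StronglyMeasurable[mXZ] σsq)
    (hσsq : σsq =ᵐ[μ] μ[fun ω => εtrue ω ^ 2 | mXZ])
    (hσpos : ∀ᵐ ω ∂μ, 0 < σsq ω)
    -- the given index function d(X,Z)
    (d : Ω → ℝ) (hdMeas : StronglyMeasurable[mXZ] d)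
    (hdenpos : ∀ᵐ ω ∂μ, 0 < (μ[fun ω' => lam ω' ^ 2 * (σsq ω')⁻¹ | mX]) ω)
    -- d*(X,Z)
    (dstar : Ω → ℝ)
    (hdstar : dstar =ᵐ[μ] fun ω =>
      lam ω * (σsq ω)⁻¹ / (μ[fun ω' => lam ω' ^ 2 * (σsq ω')⁻¹ | mX]) ω
        * (μ[fun ω' => d ω' * lam ω' | mX]) ω)
    -- possibly misspecified residual ε(m)
    (ε : Ω → ℝ)
    (hε : ε = fun ω => Y₁ ω * Real.exp (-(βX ω) * D₁ ω)
                - Y₀ ω * Real.exp (-(βX ω) * D₀ ω + mXfun ω))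
    -- integrability of everything appearing
    (hεint : Integrable ε μ)
    (hint : Integrable (fun ω => (d ω - dstar ω) * ε ω) μ)
    (hint2 : Integrable (fun ω => d ω * lam ω) μ)
    (hint3 : Integrable (fun ω => lam ω ^ 2 * (σsq ω)⁻¹) μ) :
    ∫ ω, (d ω - dstar ω) * ε ω ∂μ = 0 :=
  double_robustness_Lambda2_perp_general μ mX mXZ hle hXZ D₀ D₁ Y₀ Y₁ βX m₀X mXfun hm₀X hmXfun W hW
    hWint hWpos htrue lam hlamMeas hlam σsq hσMeas d hdMeas hdenpos dstar hdstar ε hε hεint hint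
    hint2 hint3
end

section
/- Under the repeated cross-sectional sampling assumption T ⫫ (Y₁, Y₀, D₁, D₀) | X, Z, if the multiplicative structural mean model with X empty and m = 0 implies E(Y_t e^{−βD_t} | Z) is the same ratio structure across Z, then the observed-data identity E(Y e^{−βD} | T=1, Z=1)·E(Y e^{−βD} | T=0, Z=0) = E(Y e^{−βD} | T=0, Z=1)·E(Y e^{−βD} | T=1, Z=0) holds, where Y = Y₁·1{T=1} + Y₀·1{T=0} and D = D₁·1{T=1} + D₀·1{T=0}. -/
open MeasureTheory ProbabilityTheory Real

/-! On an atom `{Z = z}` of `σ(Z)` the conditional expectations given `Z` are constant, equal to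
the conditional probabilities given `Z = z`; so conditional independence given `Z` becomes plain
independence under `μ[|Z = z]`, and conditioning further on `{T = t}` does not change the law of
`Yₜ e^{-β Dₜ}`. Since `Y e^{-β D} = Yₜ e^{-β Dₜ}` on `{T = t}`, every observed cell mean
`E(Y e^{-β D} | T = t, Z = z)` equals the panel mean `E(Yₜ e^{-β Dₜ} | Z = z)`, and the observed
identity is the panel identity. -/

namespace ProbabilityTheory

variable {Ω α β γ : Type*} {mΩ : MeasurableSpace Ω} {mα : MeasurableSpace α}
  {mβ : MeasurableSpace β} {mγ : MeasurableSpace γ} {μ : Measure Ω} [IsFiniteMeasure μ]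

lemma condExp_comap_eq_measureReal_cond [MeasurableSingletonClass γ] {Z : Ω → γ}
    (hZ : Measurable Z) {A : Set Ω} (hA : MeasurableSet A) {z : γ} (hz : μ (Z ⁻¹' {z}) ≠ 0) :
    ∀ ω ∈ Z ⁻¹' {z}, (μ⟦A | mγ.comap Z⟧) ω = μ[|Z ⁻¹' {z}].real A := by
  set s := Z ⁻¹' {z}
  have hs : MeasurableSet s := hZ (measurableSet_singleton z)
  have hs' : MeasurableSet[mγ.comap Z] s := ⟨{z}, measurableSet_singleton z, rfl⟩
  intro ω hω
  have hconst : ∀ ω' ∈ s, (μ⟦A | mγ.comap Z⟧) ω' = (μ⟦A | mγ.comap Z⟧) ω := fun ω' hω' =>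
    stronglyMeasurable_condExp.factorsThrough (hω'.trans hω.symm)
  have hint : ∫ ω' in s, (μ⟦A | mγ.comap Z⟧) ω' ∂μ = μ.real (s ∩ A) := by
    rw [setIntegral_condExp hZ.comap_le ((integrable_const 1).indicator hA) hs',
      setIntegral_indicator hA]
    simp [Set.inter_comm]
  rw [setIntegral_congr_fun hs hconst, setIntegral_const, smul_eq_mul] at hint
  rw [measureReal_def, cond_apply hs, ENNReal.toReal_mul, ENNReal.toReal_inv, ← measureReal_def,
    ← measureReal_def, ← hint, inv_mul_cancel_left₀]
  exact (measureReal_ne_zero_iff (measure_ne_top μ s)).2 hz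

lemma CondIndepFun.indepFun_cond_preimage_singleton [StandardBorelSpace Ω]
    [MeasurableSingletonClass γ] {Z : Ω → γ} (hZ : Measurable Z) {X : Ω → α} {W : Ω → β}
    (hXW : CondIndepFun (mγ.comap Z) hZ.comap_le X W μ) (hX : Measurable X) (hW : Measurable W)
    {z : γ} (hz : μ (Z ⁻¹' {z}) ≠ 0) :
    X ⟂ᵢ[μ[|Z ⁻¹' {z}]] W := by
  rw [condIndepFun_iff_condExp_inter_preimage_eq_mul hX hW] at hXW
  rw [indepFun_iff_measure_inter_preimage_eq_mul]
  intro A B hA hB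
  have : (ae (μ.restrict (Z ⁻¹' {z}))).NeBot := ae_restrict_neBot.2 hz
  obtain ⟨ω, hωz, hω⟩ := (((ae_restrict_mem (hZ (measurableSet_singleton z))).and
    (ae_restrict_of_ae (hXW A B hA hB)))).exists
  dsimp only at hω
  rw [condExp_comap_eq_measureReal_cond hZ ((hX hA).inter (hW hB)) hz ω hωz,
    condExp_comap_eq_measureReal_cond hZ (hX hA) hz ω hωz,
    condExp_comap_eq_measureReal_cond hZ (hW hB) hz ω hωz] at hω
  simpa only [measureReal_def, ← ENNReal.toReal_mul,
    ENNReal.toReal_eq_toReal_iff' (measure_ne_top _ _)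
      (ENNReal.mul_ne_top (measure_ne_top _ _) (measure_ne_top _ _))] using hω

lemma IndepFun.map_cond_preimage_eq_map {X : Ω → α} {W : Ω → β} (hXW : X ⟂ᵢ[μ] W)
    (hX : Measurable X) (hW : Measurable W) {A : Set α} (hA : MeasurableSet A)
    (hμA : μ (X ⁻¹' A) ≠ 0) :
    (μ[|X ⁻¹' A]).map W = μ.map W := by
  ext B hB
  rw [Measure.map_apply hW hB, Measure.map_apply hW hB, cond_apply (hX hA),
    hXW.measure_inter_preimage_eq_mul A B hA hB,
    ENNReal.inv_mul_cancel_left hμA (measure_ne_top _ _)]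

theorem CondIndepFun.integral_cond_inter_eq_integral_cond [StandardBorelSpace Ω]
    [MeasurableSingletonClass α] [MeasurableSingletonClass γ] {Z : Ω → γ} (hZ : Measurable Z)
    {T : Ω → α} {V : Ω → ℝ} (hTV : CondIndepFun (mγ.comap Z) hZ.comap_le T V μ)
    (hT : Measurable T) (hV : Measurable V) {t : α} {z : γ}
    (hpos : μ {ω | T ω = t ∧ Z ω = z} ≠ 0) :
    ∫ ω, V ω ∂μ[|{ω | T ω = t ∧ Z ω = z}] = ∫ ω, V ω ∂μ[|{ω | Z ω = z}] := by
  have hz : μ (Z ⁻¹' {z}) ≠ 0 := fun h => hpos (measure_mono_null (fun _ hω => hω.2) h)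
  have hcell : μ[|{ω | T ω = t ∧ Z ω = z}] = μ[|Z ⁻¹' {z}][|T ⁻¹' {t}] := by
    rw [cond_cond_eq_cond_inter (hZ (measurableSet_singleton z)) (hT (measurableSet_singleton t)),
      Set.inter_comm]
    rfl
  have ht : μ[|Z ⁻¹' {z}] (T ⁻¹' {t}) ≠ 0 := by
    rw [cond_apply (hZ (measurableSet_singleton z)), Set.inter_comm]
    exact mul_ne_zero (ENNReal.inv_ne_zero.2 (measure_ne_top _ _)) hpos
  have hmap := (hTV.indepFun_cond_preimage_singleton hZ hT hV hz).map_cond_preimage_eq_map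
    hT hV (measurableSet_singleton t) ht
  calc ∫ ω, V ω ∂μ[|{ω | T ω = t ∧ Z ω = z}]
      = ∫ x, x ∂(μ[|Z ⁻¹' {z}][|T ⁻¹' {t}]).map V := by
        rw [hcell]
        exact (integral_map hV.aemeasurable aestronglyMeasurable_id).symm
    _ = ∫ x, x ∂(μ[|Z ⁻¹' {z}]).map V := by rw [hmap]
    _ = ∫ ω, V ω ∂μ[|{ω | Z ω = z}] := integral_map hV.aemeasurable aestronglyMeasurable_id

end ProbabilityTheory

theorem repeated_cross_section_identity_general
    {Ω : Type*} {mΩ : MeasurableSpace Ω} [StandardBorelSpace Ω]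
    (μ : Measure Ω) [IsProbabilityMeasure μ]
    (T Z : Ω → ℝ) (D Yt : Fin 2 → Ω → ℝ) (β : ℝ)
    (hT : Measurable T) (hZ : Measurable Z)
    (hD : ∀ t, Measurable (D t)) (hYt : ∀ t, Measurable (Yt t))
    -- observed Y and D
    (Y Dobs : Ω → ℝ)
    (hY : Y = fun ω => Yt 1 ω * (if T ω = 1 then 1 else 0)
                + Yt 0 ω * (if T ω = 0 then 1 else 0))
    (hDobs : Dobs = fun ω => D 1 ω * (if T ω = 1 then 1 else 0)
                + D 0 ω * (if T ω = 0 then 1 else 0))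
    -- Assumption 4: T ⫫ (Y₁, Y₀, D₁, D₀) | Z
    (hindep : CondIndepFun (MeasurableSpace.comap Z inferInstance) hZ.comap_le
      T (fun ω => (Yt 1 ω, Yt 0 ω, D 1 ω, D 0 ω)) μ)
    -- positive probability of all conditioning events
    (hpos : ∀ t z : ℝ, (t = 0 ∨ t = 1) → (z = 0 ∨ z = 1) →
      μ {ω | T ω = t ∧ Z ω = z} ≠ 0)
    -- panel-data identity
    (hpanel :
      (∫ ω, Yt 1 ω * Real.exp (-β * D 1 ω) ∂(μ[|{ω | Z ω = 1}]))
        * (∫ ω, Yt 0 ω * Real.exp (-β * D 0 ω) ∂(μ[|{ω | Z ω = 0}]))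
      = (∫ ω, Yt 0 ω * Real.exp (-β * D 0 ω) ∂(μ[|{ω | Z ω = 1}]))
        * (∫ ω, Yt 1 ω * Real.exp (-β * D 1 ω) ∂(μ[|{ω | Z ω = 0}]))) :
    (∫ ω, Y ω * Real.exp (-β * Dobs ω) ∂(μ[|{ω | T ω = 1 ∧ Z ω = 1}]))
      * (∫ ω, Y ω * Real.exp (-β * Dobs ω) ∂(μ[|{ω | T ω = 0 ∧ Z ω = 0}]))
    = (∫ ω, Y ω * Real.exp (-β * Dobs ω) ∂(μ[|{ω | T ω = 0 ∧ Z ω = 1}]))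
      * (∫ ω, Y ω * Real.exp (-β * Dobs ω) ∂(μ[|{ω | T ω = 1 ∧ Z ω = 0}])) := by
  have hV₁ : CondIndepFun _ hZ.comap_le T (fun ω => Yt 1 ω * exp (-β * D 1 ω)) μ :=
    hindep.comp measurable_id
      (by fun_prop : Measurable fun p : ℝ × ℝ × ℝ × ℝ => p.1 * exp (-β * p.2.2.1))
  have hV₀ : CondIndepFun _ hZ.comap_le T (fun ω => Yt 0 ω * exp (-β * D 0 ω)) μ :=
    hindep.comp measurable_id
      (by fun_prop : Measurable fun p : ℝ × ℝ × ℝ × ℝ => p.2.1 * exp (-β * p.2.2.2))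
  have hcell : ∀ (i : Fin 2) (t z : ℝ),
      CondIndepFun _ hZ.comap_le T (fun ω => Yt i ω * exp (-β * D i ω)) μ →
      (∀ ω, T ω = t → Y ω = Yt i ω ∧ Dobs ω = D i ω) → μ {ω | T ω = t ∧ Z ω = z} ≠ 0 →
      ∫ ω, Y ω * exp (-β * Dobs ω) ∂μ[|{ω | T ω = t ∧ Z ω = z}]
        = ∫ ω, Yt i ω * exp (-β * D i ω) ∂μ[|{ω | Z ω = z}] := by
    intro i t z hV hobs hpos
    rw [← hV.integral_cond_inter_eq_integral_cond hZ hT (by fun_prop) hpos]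
    refine integral_congr_ae ?_
    filter_upwards [ae_cond_mem ((hT (measurableSet_singleton t)).inter
      (hZ (measurableSet_singleton z)))] with ω hω
    rw [(hobs ω hω.1).1, (hobs ω hω.1).2]
  have hobs₁ : ∀ ω, T ω = 1 → Y ω = Yt 1 ω ∧ Dobs ω = D 1 ω := fun ω h => by simp [hY, hDobs, h]
  have hobs₀ : ∀ ω, T ω = 0 → Y ω = Yt 0 ω ∧ Dobs ω = D 0 ω := fun ω h => by simp [hY, hDobs, h]
  rw [hcell 1 1 1 hV₁ hobs₁ (hpos 1 1 (.inr rfl) (.inr rfl)),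
    hcell 0 0 0 hV₀ hobs₀ (hpos 0 0 (.inl rfl) (.inl rfl)),
    hcell 0 0 1 hV₀ hobs₀ (hpos 0 1 (.inl rfl) (.inr rfl)),
    hcell 1 1 0 hV₁ hobs₁ (hpos 1 0 (.inr rfl) (.inl rfl))]
  exact hpanel

/-- Under repeated cross-sectional sampling T ⫫ (Y₁,Y₀,D₁,D₀) | Z
(no covariates), the panel-data moment identity implies the observed-data identity
E(Ye^{−βD}|T=1,Z=1)·E(Ye^{−βD}|T=0,Z=0) = E(Ye^{−βD}|T=0,Z=1)·E(Ye^{−βD}|T=1,Z=0). -/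
theorem repeated_cross_section_identity
    {Ω : Type*} {mΩ : MeasurableSpace Ω} [StandardBorelSpace Ω] [Nonempty Ω]
    (μ : Measure Ω) [IsProbabilityMeasure μ]
    (T Z : Ω → ℝ) (D Yt : Fin 2 → Ω → ℝ) (β : ℝ)
    (hT : Measurable T) (hZ : Measurable Z)
    (hD : ∀ t, Measurable (D t)) (hYt : ∀ t, Measurable (Yt t))
    (hTbin : ∀ ω, T ω = 0 ∨ T ω = 1)
    (hZbin : ∀ ω, Z ω = 0 ∨ Z ω = 1)
    (hDbin : ∀ t ω, D t ω = 0 ∨ D t ω = 1)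
    -- observed Y and D
    (Y Dobs : Ω → ℝ)
    (hY : Y = fun ω => Yt 1 ω * (if T ω = 1 then 1 else 0)
                + Yt 0 ω * (if T ω = 0 then 1 else 0))
    (hDobs : Dobs = fun ω => D 1 ω * (if T ω = 1 then 1 else 0)
                + D 0 ω * (if T ω = 0 then 1 else 0))
    -- Assumption 4: T ⫫ (Y₁, Y₀, D₁, D₀) | Z
    (hindep : CondIndepFun (MeasurableSpace.comap Z inferInstance) hZ.comap_le
      T (fun ω => (Yt 1 ω, Yt 0 ω, D 1 ω, D 0 ω)) μ)
    -- positive probability of all conditioning events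
    (hpos : ∀ t z : ℝ, (t = 0 ∨ t = 1) → (z = 0 ∨ z = 1) →
      μ {ω | T ω = t ∧ Z ω = z} ≠ 0)
    -- panel-data identity
    (hpanel :
      (∫ ω, Yt 1 ω * Real.exp (-β * D 1 ω) ∂(μ[|{ω | Z ω = 1}]))
        * (∫ ω, Yt 0 ω * Real.exp (-β * D 0 ω) ∂(μ[|{ω | Z ω = 0}]))
      = (∫ ω, Yt 0 ω * Real.exp (-β * D 0 ω) ∂(μ[|{ω | Z ω = 1}]))
        * (∫ ω, Yt 1 ω * Real.exp (-β * D 1 ω) ∂(μ[|{ω | Z ω = 0}]))) :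
    (∫ ω, Y ω * Real.exp (-β * Dobs ω) ∂(μ[|{ω | T ω = 1 ∧ Z ω = 1}]))
      * (∫ ω, Y ω * Real.exp (-β * Dobs ω) ∂(μ[|{ω | T ω = 0 ∧ Z ω = 0}]))
    = (∫ ω, Y ω * Real.exp (-β * Dobs ω) ∂(μ[|{ω | T ω = 0 ∧ Z ω = 1}]))
      * (∫ ω, Y ω * Real.exp (-β * Dobs ω) ∂(μ[|{ω | T ω = 1 ∧ Z ω = 0}])) :=
  repeated_cross_section_identity_general (mΩ := mΩ) μ T Z D Yt β hT hZ hD hYt Y Dobs hY hDobs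
    hindep hpos hpanel
end
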